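/- arXiv:1902.09973 — 2 statements merged into one kernel-verified Lean document; each statement's English description precedes it below -/
import Mathlib

section
/- For every real u, 3·(exp(u^2) - 1 - u^2 - u^4/2) ≤ u^2·(exp(u^2) - 1 - u^2). -/
private lemma aux1 (t : ℝ) : 0 ≤ Real.exp t * (t - 1) + 1 := by
  have h := Real.add_one_le_exp (-t)
  have h2 : (1 - t) * Real.exp t ≤ Real.exp (-t) * Real.exp t := by
    apply mul_le_mul_of_nonneg_right _ (Real.exp_pos t).le
    linarith
  rw [← Real.exp_add] at h2
  simp at h2
  nlinarith

private lemma aux2 (x : ℝ) (hx : 0 ≤ x) : 0 ≤ Real.exp x * (x - 2) + (x + 2) := by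
  set g : ℝ → ℝ := fun t => Real.exp t * (t - 2) + (t + 2) with hg
  have hd : ∀ t : ℝ, HasDerivAt g (Real.exp t * (t - 2) + Real.exp t * 1 + 1) t := by
    intro t
    have h1 : HasDerivAt (fun t : ℝ => Real.exp t * (t - 2))
        (Real.exp t * (t - 2) + Real.exp t * 1) t :=
      (Real.hasDerivAt_exp t).mul ((hasDerivAt_id t).sub_const 2)
    exact h1.add ((hasDerivAt_id t).add_const 2)
  have hmono : Monotone g := by
    apply monotone_of_deriv_nonneg
    · exact fun t => (hd t).differentiableAt
    · intro t
      rw [(hd t).deriv]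
      nlinarith [aux1 t, (Real.exp_pos t).le]
  have := hmono hx
  simp only [hg, Real.exp_zero] at this ⊢
  linarith

private lemma aux3 (x : ℝ) (hx : 0 ≤ x) :
    0 ≤ (x - 3) * Real.exp x + (2 * x + x ^ 2 / 2 + 3) := by
  set f : ℝ → ℝ := fun t => (t - 3) * Real.exp t + (2 * t + t ^ 2 / 2 + 3) with hf
  have hd : ∀ t : ℝ, HasDerivAt f (1 * Real.exp t + (t - 3) * Real.exp t + (2 + 2 * t / 2)) t := by
    intro t
    have h1 : HasDerivAt (fun t : ℝ => (t - 3) * Real.exp t)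
        (1 * Real.exp t + (t - 3) * Real.exp t) t :=
      ((hasDerivAt_id t).sub_const 3).mul (Real.hasDerivAt_exp t)
    have h2 : HasDerivAt (fun t : ℝ => 2 * t + t ^ 2 / 2 + 3) (2 + 2 * t / 2) t := by
      have : HasDerivAt (fun t : ℝ => t ^ 2) (2 * t) t := by
        simpa using hasDerivAt_pow 2 t
      simpa using (((hasDerivAt_id t).const_mul 2).add (this.div_const 2)).add_const 3
    exact h1.add h2
  have hmono : MonotoneOn f (Set.Ici 0) := by
    apply monotoneOn_of_deriv_nonneg (convex_Ici 0)
    · exact Continuous.continuousOn (by fun_prop)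
    · intro t ht
      exact (hd t).differentiableAt.differentiableWithinAt
    · intro t ht
      simp only [interior_Ici, Set.mem_Ioi] at ht
      rw [(hd t).deriv]
      nlinarith [aux2 t ht.le]
  have := hmono (Set.self_mem_Ici) (Set.mem_Ici.mpr hx) hx
  simp only [hf, Real.exp_zero] at this ⊢
  linarith

theorem exp_nlkg_virial_ineq (u : ℝ) :
    3 * (Real.exp (u ^ 2) - 1 - u ^ 2 - u ^ 4 / 2) ≤
      u ^ 2 * (Real.exp (u ^ 2) - 1 - u ^ 2) := by
  have h := aux3 (u ^ 2) (sq_nonneg u)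
  nlinarith [h]
end

section
/- The function Q(x) = 3^{1/4}/√(cosh(2x)) is positive and satisfies Q''(x) + Q(x)⁵ = Q(x) for every real x. -/
/-!
Write `k = (p - 1) / 2`, so that `Q = A * cosh (k x) ^ (-1 / k)` has logarithmic derivative
`-tanh (k x)`. Differentiating `Q' = -tanh (k x) * Q` once more gives
`Q'' = (tanh² (k x) - k / cosh² (k x)) * Q = Q - (k + 1) / cosh² (k x) * Q`,
and the amplitude `A = ((p + 1) / 2) ^ (1 / (p - 1))` is exactly the one for which
`Q ^ (p - 1) = (k + 1) / cosh² (k x)`. The quintic case is `p = 5`.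
-/

open Real

theorem Real.hasDerivAt_tanh (x : ℝ) : HasDerivAt tanh (1 / cosh x ^ 2) x := by
  rw [funext tanh_eq_sinh_div_cosh]
  refine ((hasDerivAt_sinh x).div (hasDerivAt_cosh x) (cosh_pos x).ne').congr_deriv ?_
  rw [← cosh_sq_sub_sinh_sq x]
  ring

/-- The ground state of `Q'' + Q ^ p = Q` on the line, for `1 < p`. -/
noncomputable def groundState (p x : ℝ) : ℝ :=
  ((p + 1) / 2) ^ (1 / (p - 1)) * cosh ((p - 1) / 2 * x) ^ (-(2 / (p - 1)))

namespace groundState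

variable {p : ℝ}

theorem pos (hp : 1 < p) (x : ℝ) : 0 < groundState p x := by
  unfold groundState
  have := cosh_pos ((p - 1) / 2 * x)
  positivity

theorem rpow_sub_one (hp : 1 < p) (x : ℝ) :
    groundState p x ^ (p - 1) = (p + 1) / 2 / cosh ((p - 1) / 2 * x) ^ 2 := by
  have hp' : p - 1 ≠ 0 := by linarith
  have hc := cosh_pos ((p - 1) / 2 * x)
  unfold groundState
  rw [mul_rpow (by positivity) (by positivity), ← rpow_mul (by positivity),
    ← rpow_mul hc.le, one_div_mul_cancel hp', rpow_one,
    show -(2 / (p - 1)) * (p - 1) = -(2 : ℕ) by field_simp; norm_num, rpow_neg hc.le,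
    rpow_natCast, ← div_eq_mul_inv]

theorem rpow_eq_mul (hp : 1 < p) (x : ℝ) :
    groundState p x ^ p = groundState p x * ((p + 1) / 2 / cosh ((p - 1) / 2 * x) ^ 2) := by
  rw [← rpow_sub_one hp, Real.rpow_sub_one (pos hp x).ne']
  field_simp [(pos hp x).ne']

theorem hasDerivAt (hp : 1 < p) (x : ℝ) :
    HasDerivAt (groundState p) (-tanh ((p - 1) / 2 * x) * groundState p x) x := by
  have hc := cosh_pos ((p - 1) / 2 * x)
  have hcosh : HasDerivAt (fun y => cosh ((p - 1) / 2 * y))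
      (sinh ((p - 1) / 2 * x) * ((p - 1) / 2)) x :=
    (hasDerivAt_cosh _).comp x (hasDerivAt_const_mul _)
  refine ((hcosh.rpow_const (p := -(2 / (p - 1))) (Or.inl hc.ne')).const_mul
    (((p + 1) / 2) ^ (1 / (p - 1)))).congr_deriv ?_
  have hp' : p - 1 ≠ 0 := by linarith
  unfold groundState
  rw [tanh_eq_sinh_div_cosh, rpow_sub hc, rpow_one]
  field_simp

theorem deriv_eq (hp : 1 < p) :
    deriv (groundState p) = fun x => -tanh ((p - 1) / 2 * x) * groundState p x :=
  funext fun x => (hasDerivAt hp x).deriv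

theorem hasDerivAt_deriv (hp : 1 < p) (x : ℝ) :
    HasDerivAt (deriv (groundState p)) (groundState p x - groundState p x ^ p) x := by
  have htanh : HasDerivAt (fun y => tanh ((p - 1) / 2 * y))
      (1 / cosh ((p - 1) / 2 * x) ^ 2 * ((p - 1) / 2)) x :=
    (hasDerivAt_tanh _).comp x (hasDerivAt_const_mul _)
  rw [deriv_eq hp]
  refine (htanh.neg.mul (hasDerivAt hp x)).congr_deriv ?_
  have hc := (cosh_pos ((p - 1) / 2 * x)).ne'
  rw [Pi.neg_apply, rpow_eq_mul hp, tanh_eq_sinh_div_cosh]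
  field_simp
  rw [cosh_sq]
  ring

end groundState

theorem ground_state_quintic :
    let Q : ℝ → ℝ := fun x => (3 : ℝ) ^ ((1 : ℝ) / 4) / Real.sqrt (Real.cosh (2 * x))
    ∀ x : ℝ, 0 < Q x ∧ DifferentiableAt ℝ Q x ∧
      HasDerivAt (deriv Q) (Q x - Q x ^ 5) x := by
  intro Q
  have hQ : Q = groundState 5 := by
    funext x
    show 3 ^ (1 / 4 : ℝ) / √(cosh (2 * x)) = _
    rw [groundState, sqrt_eq_rpow, div_eq_mul_inv, ← rpow_neg (cosh_pos _).le]
    norm_num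
  have hp : (1 : ℝ) < 5 := by norm_num
  intro x
  rw [hQ, ← rpow_ofNat]
  exact ⟨groundState.pos hp x, (groundState.hasDerivAt hp x).differentiableAt,
    groundState.hasDerivAt_deriv hp x⟩
end
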